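/- arXiv:math/0505271 — 2 statements merged into one kernel-verified Lean document; each statement's English description precedes it below -/
import Mathlib

section
/- Let c₀ ≥ 82 with c₀ = (2kπ + π/2)⁴ for some k ∈ ℕ, and suppose 2/√c₀ < 1/4. Define p(t) = 1/√(t+c₀) and q(t) = 1/√(t+c₀) + (1/(4(t+c₀)^{3/4})) sin((t+c₀)^{1/4}). For a, b ∈ (-1,1) define H_{a,b}(T) = ∫₀ᵀ (p(t+a) - q(t+b)) dt. Then limsup_{T→∞} H_{a,b}(T) > 1/4 and liminf_{T→∞} H_{a,b}(T) < -1/4, and limsup_{T→∞} H_{a,b}(T) - liminf_{T→∞} H_{a,b}(T) ≥ 1. -/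
/-!
For `T ≥ 0` the integral has the closed form
`2(√(T+a+c₀) - √(T+b+c₀)) - 2(√(a+c₀) - √(b+c₀))` (the square-root part)
`+ cos((T+b+c₀)^{1/4}) - cos((b+c₀)^{1/4})`.
Because `|a - b| < 2` and `a + c₀, b + c₀ > 81`, both square-root differences have the sign
of `a - b` and size at most `1/9`, so the square-root part stays within `2/9` of `0`.
Because `b + c₀` is within `1` of `(2kπ + π/2)⁴`, its fourth root is within `1/108` of a zero
of `cos`. The remaining term `cos((T+b+c₀)^{1/4})` takes the values `1` and `-1` for
arbitrarily large `T`.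
-/

open Real Filter intervalIntegral

lemma hasDerivAt_two_mul_sqrt {x : ℝ} (hx : 0 < x) :
    HasDerivAt (fun x => 2 * √x) (1 / √x) x :=
  ((hasDerivAt_sqrt hx.ne').const_mul 2).congr_deriv (by field_simp)

lemma hasDerivAt_cos_rpow_quarter {x : ℝ} (hx : 0 < x) :
    HasDerivAt (fun x => cos (x ^ (1/4 : ℝ)))
      (-(1 / (4 * x ^ (3/4 : ℝ)) * sin (x ^ (1/4 : ℝ)))) x := by
  convert (hasDerivAt_rpow_const (p := 1/4) (Or.inl hx.ne')).cos using 1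
  rw [show (1/4 : ℝ) - 1 = -(3/4) by norm_num, rpow_neg hx.le]
  ring

lemma integral_inv_sqrt_sub (A B T : ℝ) (hA : 0 < A) (hB : 0 < B) (hT : 0 ≤ T) :
    ∫ t in (0:ℝ)..T, (1 / √(t + A) - (1 / √(t + B) +
      1 / (4 * (t + B) ^ ((3:ℝ)/4)) * sin ((t + B) ^ ((1:ℝ)/4)))) =
      2 * (√(T + A) - √(T + B)) - 2 * (√A - √B)
        + cos ((T + B) ^ ((1:ℝ)/4)) - cos (B ^ ((1:ℝ)/4)) := by
  have hpos : ∀ t ∈ Set.uIcc 0 T, 0 < t + A ∧ 0 < t + B := fun t ht => by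
    rw [Set.uIcc_of_le hT] at ht
    constructor <;> linarith [ht.1]
  have hderiv : ∀ t ∈ Set.uIcc 0 T, HasDerivAt
      (fun s => 2 * √(s + A) - 2 * √(s + B) + cos ((s + B) ^ ((1:ℝ)/4)))
      (1 / √(t + A) - (1 / √(t + B) +
        1 / (4 * (t + B) ^ ((3:ℝ)/4)) * sin ((t + B) ^ ((1:ℝ)/4)))) t := fun t ht => by
    obtain ⟨htA, htB⟩ := hpos t ht
    exact ((((hasDerivAt_two_mul_sqrt htA).comp_add_const t A).sub
      ((hasDerivAt_two_mul_sqrt htB).comp_add_const t B)).add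
      ((hasDerivAt_cos_rpow_quarter htB).comp_add_const t B)).congr_deriv (by ring)
  have hcont : ContinuousOn (fun t => 1 / √(t + A) - (1 / √(t + B) +
      1 / (4 * (t + B) ^ ((3:ℝ)/4)) * sin ((t + B) ^ ((1:ℝ)/4)))) (Set.uIcc 0 T) := by
    fun_prop (disch := first
      | (intro t ht; have := hpos t ht
         simp [sqrt_ne_zero', this.1, this.2, (rpow_pos_of_pos this.2 _).ne']; done)
      | norm_num)
  rw [integral_eq_sub_of_hasDerivAt hderiv hcont.intervalIntegrable]
  simp only [zero_add]
  ring

lemma sqrt_sub_sqrt_le {m u v : ℝ} (hm : 0 < m) (hu : m ^ 2 ≤ u) (huv : u ≤ v) :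
    √v - √u ≤ (v - u) / (2 * m) := by
  have hmu : m ≤ √u := (le_sqrt' hm).2 hu
  have huv' : √u ≤ √v := sqrt_le_sqrt huv
  have hsu : √u ^ 2 = u := sq_sqrt (by nlinarith)
  have hsv : √v ^ 2 = v := sq_sqrt (by nlinarith)
  rw [le_div_iff₀ (by positivity)]
  nlinarith

lemma abs_sqrt_add_sub_sqrt_add_sub_le {A B T : ℝ} (hA : 81 ≤ A) (hB : 81 ≤ B)
    (hAB : |A - B| ≤ 2) (hT : 0 ≤ T) :
    |(√(T + A) - √(T + B)) - (√A - √B)| ≤ 1/9 := by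
  wlog h : A ≤ B generalizing A B
  · rw [← abs_neg]
    convert this hB hA (by rwa [abs_sub_comm]) (le_of_not_ge h) using 2
    ring
  have hAB' : B ≤ A + 2 := by linarith [(abs_le.1 hAB).1]
  have h₀ := sqrt_sub_sqrt_le (m := 9) (by norm_num) (by linarith) h
  have hT₀ := sqrt_sub_sqrt_le (m := 9) (u := T + A) (v := T + B) (by norm_num) (by linarith)
    (by linarith)
  have hmono₀ := sqrt_le_sqrt h
  have hmonoT := sqrt_le_sqrt (by linarith : T + A ≤ T + B)
  rw [abs_le]
  constructor <;> nlinarith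

lemma four_mul_pow_three_mul_abs_sub_le {m v w : ℝ} (hm : 0 ≤ m) (hv : m ≤ v) (hw : m ≤ w) :
    4 * m ^ 3 * |v - w| ≤ |v ^ 4 - w ^ 4| := by
  have hfactor : v ^ 4 - w ^ 4 = (v - w) * (v ^ 3 + v ^ 2 * w + v * w ^ 2 + w ^ 3) := by ring
  have hsum : 4 * m ^ 3 ≤ v ^ 3 + v ^ 2 * w + v * w ^ 2 + w ^ 3 := by
    have h₁ : m ^ 3 ≤ v ^ 3 := by gcongr
    have hv₀ : 0 ≤ v := hm.trans hv
    have h₂ : m ^ 2 * m ≤ v ^ 2 * w := by gcongr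
    have h₃ : m * m ^ 2 ≤ v * w ^ 2 := by gcongr
    have h₄ : m ^ 3 ≤ w ^ 3 := by gcongr
    nlinarith
  rw [hfactor, abs_mul, abs_of_nonneg ((by positivity : 0 ≤ 4 * m ^ 3).trans hsum)]
  nlinarith [abs_nonneg (v - w)]

lemma abs_cos_le_abs_sub_of_cos_eq_zero {v w : ℝ} (hw : cos w = 0) : |cos v| ≤ |v - w| :=
  calc |cos v| = |sin (v - w)| * |sin w| := by
        rw [← abs_mul, show v = (v - w) + w by ring, cos_add, hw]; simp
    _ ≤ |sin (v - w)| := mul_le_of_le_one_right (abs_nonneg _) (abs_sin_le_one w)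
    _ ≤ |v - w| := abs_sin_le_abs

lemma abs_cos_rpow_quarter_le {B w : ℝ} (hB : 81 ≤ B) (hw₀ : 0 ≤ w) (hw : 81 ≤ w ^ 4)
    (hcos : cos w = 0) (hBw : |B - w ^ 4| ≤ 1) : |cos (B ^ ((1:ℝ)/4))| ≤ 1/108 := by
  set v := B ^ ((1:ℝ)/4)
  have hv₀ : 0 ≤ v := by positivity
  have hv : v ^ 4 = B := by
    simpa only [v, one_div, Nat.cast_ofNat] using
      rpow_inv_natCast_pow (n := 4) (by linarith) (by norm_num)
  have hv₃ : 3 ≤ v := le_of_pow_le_pow_left₀ (n := 4) (by norm_num) hv₀ (by linarith)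
  have hw₃ : 3 ≤ w := le_of_pow_le_pow_left₀ (n := 4) (by norm_num) hw₀ (by linarith)
  have hvw := four_mul_pow_three_mul_abs_sub_le (by norm_num) hv₃ hw₃
  rw [hv] at hvw
  linarith [abs_cos_le_abs_sub_of_cos_eq_zero (v := v) hcos]

lemma frequently_cos_rpow_quarter_eq (B : ℝ) {θ : ℝ} (hθ : 0 ≤ θ) :
    ∃ᶠ T in atTop, cos ((T + B) ^ ((1:ℝ)/4)) = cos θ := by
  have hx : Tendsto (fun n : ℕ => θ + n * (2 * π)) atTop atTop :=
    tendsto_atTop_add_const_left _ _ (tendsto_natCast_atTop_atTop.atTop_mul_const two_pi_pos)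
  have hT : Tendsto (fun n : ℕ => (θ + n * (2 * π)) ^ 4 + -B) atTop atTop :=
    tendsto_atTop_add_const_right _ _ ((tendsto_pow_atTop (n := 4) (by norm_num)).comp hx)
  refine hT.frequently (Frequently.of_forall fun n => ?_)
  have hxn : 0 ≤ θ + n * (2 * π) := by positivity
  simp only [neg_add_cancel_right, one_div]
  rw [← Nat.cast_ofNat (R := ℝ) (n := 4), pow_rpow_inv_natCast hxn (by norm_num),
    cos_add_nat_mul_two_pi]

lemma le_limsup_of_frequently_cos_eq_one {α : Type*} {l : Filter α} {H g φ : α → ℝ}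
    {ε : ℝ} (hH : ∀ᶠ T in l, H T = g T + cos (φ T)) (hg : ∀ᶠ T in l, |g T| ≤ ε)
    (hφ : ∃ᶠ T in l, cos (φ T) = 1) : 1 - ε ≤ limsup H l := by
  refine le_limsup_of_frequently_le ?_ (isBoundedUnder_of_eventually_le (a := ε + 1) ?_)
  · refine (hφ.and_eventually (hH.and hg)).mono ?_
    rintro T ⟨hcos, hHT, hgT⟩
    rw [hHT, hcos]
    linarith [(abs_le.1 hgT).1]
  · filter_upwards [hH, hg] with T hHT hgT
    rw [hHT]
    linarith [(abs_le.1 hgT).2, cos_le_one (φ T)]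

lemma liminf_le_of_frequently_cos_eq_neg_one {α : Type*} {l : Filter α} {H g φ : α → ℝ}
    {ε : ℝ} (hH : ∀ᶠ T in l, H T = g T + cos (φ T)) (hg : ∀ᶠ T in l, |g T| ≤ ε)
    (hφ : ∃ᶠ T in l, cos (φ T) = -1) : liminf H l ≤ ε - 1 := by
  refine liminf_le_of_frequently_le ?_ (isBoundedUnder_of_eventually_ge (a := -ε - 1) ?_)
  · refine (hφ.and_eventually (hH.and hg)).mono ?_
    rintro T ⟨hcos, hHT, hgT⟩
    rw [hHT, hcos]
    linarith [(abs_le.1 hgT).2]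
  · filter_upwards [hH, hg] with T hHT hgT
    rw [hHT]
    linarith [(abs_le.1 hgT).1, neg_one_le_cos (φ T)]

theorem stmt_6_general (k : ℕ) (c₀ : ℝ)
    (hc₀eq : c₀ = (2 * k * Real.pi + Real.pi / 2) ^ 4)
    (hc₀ : 82 ≤ c₀)
    (p q : ℝ → ℝ)
    (hp : ∀ t : ℝ, p t = 1 / Real.sqrt (t + c₀))
    (hq : ∀ t : ℝ, q t = 1 / Real.sqrt (t + c₀) +
      (1 / (4 * (t + c₀) ^ ((3:ℝ)/4))) * Real.sin ((t + c₀) ^ ((1:ℝ)/4)))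
    (a b : ℝ) (ha : |a| < 1) (hb : |b| < 1)
    (H : ℝ → ℝ)
    (hH : ∀ T : ℝ, H T = ∫ t in (0:ℝ)..T, (p (t + a) - q (t + b))) :
    Filter.limsup H Filter.atTop > 1/4 ∧
    Filter.liminf H Filter.atTop < -1/4 ∧
    Filter.limsup H Filter.atTop - Filter.liminf H Filter.atTop ≥ 1 := by
  obtain ⟨ha₁, ha₂⟩ := abs_lt.1 ha
  obtain ⟨hb₁, hb₂⟩ := abs_lt.1 hb
  let g : ℝ → ℝ := fun T =>
    2 * ((√(T + (a + c₀)) - √(T + (b + c₀))) - (√(a + c₀) - √(b + c₀)))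
      - cos ((b + c₀) ^ ((1:ℝ)/4))
  have hHg : ∀ᶠ T in atTop, H T = g T + cos ((T + (b + c₀)) ^ ((1:ℝ)/4)) := by
    filter_upwards [eventually_ge_atTop 0] with T hT
    simp only [hH, hp, hq, add_assoc]
    rw [integral_inv_sqrt_sub _ _ T (by linarith) (by linarith) hT]
    ring
  have hcos : |cos ((b + c₀) ^ ((1:ℝ)/4))| ≤ 1/108 := by
    refine abs_cos_rpow_quarter_le (w := 2 * k * π + π / 2) (by linarith) (by positivity)
      (by linarith) (cos_eq_zero_iff.2 ⟨2 * k, by push_cast; ring⟩) ?_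
    rw [← hc₀eq, add_sub_cancel_right]
    exact hb.le
  have hg : ∀ᶠ T in atTop, |g T| ≤ 2/9 + 1/108 := by
    filter_upwards [eventually_ge_atTop 0] with T hT
    have hsqrt := abs_sqrt_add_sub_sqrt_add_sub_le (A := a + c₀) (B := b + c₀) (by linarith)
      (by linarith) (by rw [abs_le]; constructor <;> linarith) hT
    rw [abs_le] at hsqrt hcos ⊢
    constructor <;> linarith [hsqrt.1, hsqrt.2, hcos.1, hcos.2]
  have hsup := le_limsup_of_frequently_cos_eq_one hHg hg
    (by simpa using frequently_cos_rpow_quarter_eq (b + c₀) le_rfl)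
  have hinf := liminf_le_of_frequently_cos_eq_neg_one hHg hg
    (by simpa using frequently_cos_rpow_quarter_eq (b + c₀) pi_pos.le)
  exact ⟨by linarith, by linarith, by linarith⟩

/-- Main properties of H_{a,b}: with c₀ = (2kπ + π/2)⁴ ≥ 82 and 2/√c₀ < 1/4, for
    p(t) = 1/√(t+c₀), q(t) = 1/√(t+c₀) + (1/(4(t+c₀)^(3/4))) sin((t+c₀)^(1/4)) and
    H_{a,b}(T) = ∫₀ᵀ (p(t+a) - q(t+b)) dt, a, b ∈ (-1,1), one has
    limsup H > 1/4, liminf H < -1/4 and limsup H - liminf H ≥ 1. -/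
theorem stmt_6 (k : ℕ) (c₀ : ℝ)
    (hc₀eq : c₀ = (2 * k * Real.pi + Real.pi / 2) ^ 4)
    (hc₀ : 82 ≤ c₀)
    (hc₀' : 2 / Real.sqrt c₀ < 1/4)
    (p q : ℝ → ℝ)
    (hp : ∀ t : ℝ, p t = 1 / Real.sqrt (t + c₀))
    (hq : ∀ t : ℝ, q t = 1 / Real.sqrt (t + c₀) +
      (1 / (4 * (t + c₀) ^ ((3:ℝ)/4))) * Real.sin ((t + c₀) ^ ((1:ℝ)/4)))
    (a b : ℝ) (ha : |a| < 1) (hb : |b| < 1)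
    (H : ℝ → ℝ)
    (hH : ∀ T : ℝ, H T = ∫ t in (0:ℝ)..T, (p (t + a) - q (t + b))) :
    Filter.limsup H Filter.atTop > 1/4 ∧
    Filter.liminf H Filter.atTop < -1/4 ∧
    Filter.limsup H Filter.atTop - Filter.liminf H Filter.atTop ≥ 1 :=
  stmt_6_general k c₀ hc₀eq hc₀ p q hp hq a b ha hb H hH
end

section
/- Let q, φ, g be as above. Then g is C¹ on [0, q(-1)); in particular g'(r) → 0 = g'(0) as r → 0⁺. -/
/-!
In the variable `x = (t + c₀) ^ (1/4)` every fractional power becomes an integer one: `q'(t)` and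
`q''(t)` are `dQ x` and `d2Q x`, rational in `x`, `sin x`, `cos x`, and for `x ≥ 3` (that is,
`t ≥ -1`) one has `x⁻⁶ / 8 ≤ |q'(t)| ≤ x⁻⁶` and `|q''(t)| ≤ x⁻⁹`. Since `φ` inverts `q`, the chain
rule and the inverse function theorem give `g' = q''(φ) / q'(φ)`, so `|g'(r)| ≤ 8 x⁻³` with
`x = (φ r + c₀) ^ (1/4)`. As `q` decreases to `0`, `φ r → ∞` when `r → 0⁺`, hence `g(r) → 0` and
`g'(r) → 0`; a function continuous at an endpoint whose derivative has a limit there is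
differentiable there with that derivative, which gives the `C¹` regularity up to `r = 0`.
-/

open Real Set Filter Topology

theorem StrictAntiOn.continuousAt_of_image_mem_nhds {α β : Type*} [LinearOrder α]
    [TopologicalSpace α] [OrderTopology α] [LinearOrder β] [TopologicalSpace β] [OrderTopology β]
    [DenselyOrdered β] {f : α → β} {s : Set α} {a : α} (h_anti : StrictAntiOn f s)
    (hs : s ∈ 𝓝 a) (hfs : f '' s ∈ 𝓝 (f a)) : ContinuousAt f a :=
  h_anti.dual_right.continuousAt_of_image_mem_nhds hs hfs

theorem StrictAntiOn.lt_of_tendsto_atTop {α β : Type*} [LinearOrder α] [NoMaxOrder α]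
    [LinearOrder β] [TopologicalSpace β] [OrderClosedTopology β] {f : α → β} {a t : α} {L : β}
    (hf : StrictAntiOn f (Ici a)) (hlim : Tendsto f atTop (𝓝 L)) (ht : a ≤ t) : L < f t := by
  obtain ⟨t', htt'⟩ := exists_gt t
  have : Nonempty α := ⟨t⟩
  have ht' : a ≤ t' := ht.trans htt'.le
  calc L ≤ f t' := le_of_tendsto hlim <| by
        filter_upwards [eventually_ge_atTop t'] with s hs
        exact hf.antitoneOn ht' (ht'.trans hs) hs
    _ < f t := hf ht ht' htt'

theorem StrictAntiOn.strictAntiOn_of_rightInvOn {α β : Type*} [LinearOrder α] [LinearOrder β]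
    {q : α → β} {φ : β → α} {s : Set β} {t : Set α} (hq : StrictAntiOn q t)
    (hmaps : MapsTo φ s t) (hinv : RightInvOn φ q s) : StrictAntiOn φ s := fun r₁ h₁ r₂ h₂ h =>
  (hq.lt_iff_gt (hmaps h₁) (hmaps h₂)).1 (by rwa [hinv h₁, hinv h₂])

namespace StrictAntiOn

variable {q φ : ℝ → ℝ} {a m : ℝ}

theorem continuousOn_of_rightInvOn (hq : StrictAntiOn q (Ici a)) (hm : ∀ t, a ≤ t → m < q t)
    (hmaps : MapsTo φ (Ioo m (q a)) (Ioi a)) (hinv : RightInvOn φ q (Ioo m (q a)))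
    (hleft : LeftInvOn φ q (Ici a)) : ContinuousOn φ (Ioo m (q a)) := by
  have himage : φ '' Ioo m (q a) = Ioi a := by
    refine subset_antisymm hmaps.image_subset fun t ht => ?_
    have ht' : t ∈ Ici a := mem_Ici.2 (le_of_lt ht)
    exact ⟨q t, ⟨hm t ht', hq self_mem_Ici ht' ht⟩, hleft ht'⟩
  intro r hr
  refine (continuousAt_of_image_mem_nhds ?_ (isOpen_Ioo.mem_nhds hr) ?_).continuousWithinAt
  · exact hq.strictAntiOn_of_rightInvOn (hmaps.mono_right Ioi_subset_Ici_self) hinv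
  · rw [himage]
    exact Ioi_mem_nhds (hmaps hr)

theorem tendsto_atTop_of_rightInvOn {b : ℝ} (hq : StrictAntiOn q (Ici a))
    (hm : ∀ t, a ≤ t → m < q t) (hmb : m < b) (hmaps : MapsTo φ (Ioo m b) (Ioi a))
    (hinv : RightInvOn φ q (Ioo m b)) : Tendsto φ (𝓝[>] m) atTop := by
  refine tendsto_atTop.2 fun T => ?_
  have hT : a ≤ max T a := le_max_right T a
  filter_upwards [Ioo_mem_nhdsGT (lt_min hmb (hm _ hT))] with r hr
  have hr' : r ∈ Ioo m b := ⟨hr.1, hr.2.trans_le (min_le_left _ _)⟩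
  by_contra! h
  have := hq (mem_Ici.2 (le_of_lt (hmaps hr'))) hT (h.trans_le (le_max_left T a))
  rw [hinv hr'] at this
  exact (this.trans (hr.2.trans_le (min_le_right _ _))).false

end StrictAntiOn

theorem HasDerivAt.comp_of_local_left_inverse {𝕜 : Type*} [NontriviallyNormedField 𝕜]
    {f f' f'' g : 𝕜 → 𝕜} {a : 𝕜} (hf : HasDerivAt f (f' (g a)) (g a))
    (hf' : HasDerivAt f' (f'' (g a)) (g a)) (hne : f' (g a) ≠ 0) (hg : ContinuousAt g a)
    (hfg : ∀ᶠ y in 𝓝 a, f (g y) = y) :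
    HasDerivAt (fun y => f' (g y)) (f'' (g a) / f' (g a)) a := by
  rw [div_eq_mul_inv]
  exact hf'.comp a (hf.of_local_left_inverse hg hne hfg)

theorem contDiffOn_one_Ico_of_tendsto {f f' : ℝ → ℝ} {a b L : ℝ} (hab : a < b)
    (hf : ∀ x ∈ Ioo a b, HasDerivAt f (f' x) x) (hf' : ContinuousOn f' (Ioo a b))
    (hfa : ContinuousWithinAt f (Ioi a) a) (hlim : Tendsto f' (𝓝[>] a) (𝓝 L)) :
    ContDiffOn ℝ 1 f (Ico a b) := by
  have hderiv : ∀ x ∈ Ioo a b, derivWithin f (Ico a b) x = f' x := fun x hx =>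
    (hf x hx).hasDerivWithinAt.derivWithin (uniqueDiffOn_Ico a b x (Ioo_subset_Ico_self hx))
  have ha : HasDerivWithinAt f L (Ico a b) a := by
    refine (hasDerivWithinAt_Ici_of_tendsto_deriv
      (fun x hx => (hf x hx).differentiableAt.differentiableWithinAt)
      (hfa.mono Ioo_subset_Ioi_self) (Ioo_mem_nhdsGT hab) ?_).mono Ico_subset_Ici_self
    refine hlim.congr' ?_
    filter_upwards [Ioo_mem_nhdsGT hab] with x hx
    exact (hf x hx).deriv.symm
  rw [contDiffOn_one_iff_derivWithin (uniqueDiffOn_Ico a b)]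
  refine ⟨fun x hx => ?_, fun x hx => ?_⟩
  · rcases hx.1.eq_or_lt with rfl | hax
    · exact ha.differentiableWithinAt
    · exact (hf x ⟨hax, hx.2⟩).differentiableAt.differentiableWithinAt
  · rcases hx.1.eq_or_lt with rfl | hax
    · have h : ContinuousWithinAt (derivWithin f (Ico a b)) (Ioo a b) a := by
        rw [ContinuousWithinAt, ha.derivWithin (uniqueDiffOn_Ico a b a hx)]
        refine (hlim.mono_left (nhdsWithin_mono _ Ioo_subset_Ioi_self)).congr' ?_
        filter_upwards [self_mem_nhdsWithin] with y hy
        exact (hderiv y hy).symm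
      simpa only [Ioo_insert_left hab] using continuousWithinAt_insert_self.2 h
    · refine ((hf'.continuousAt (Ioo_mem_nhds hax hx.2)).congr ?_).continuousWithinAt
      filter_upwards [Ioo_mem_nhds hax hx.2] with y hy
      exact (hderiv y hy).symm

noncomputable def Q (u : ℝ) : ℝ :=
  1 / Real.sqrt u + Real.sin (u ^ ((1:ℝ)/4)) / u ^ ((3:ℝ)/4)

noncomputable def dQ (x : ℝ) : ℝ := (cos x - 2 - 3 * sin x / x) / (4 * x ^ 6)

noncomputable def d2Q (x : ℝ) : ℝ :=
  (-sin x + (12 - 9 * cos x) / x + 21 * sin x / x ^ 2) / (16 * x ^ 9)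

lemma rpow_quarter_pow {u : ℝ} (hu : 0 ≤ u) (n : ℕ) :
    (u ^ ((1:ℝ)/4)) ^ n = u ^ ((n:ℝ)/4) := by
  rw [← rpow_natCast, ← rpow_mul hu]
  ring_nf

lemma three_le_rpow_quarter {u : ℝ} (hu : 81 ≤ u) : 3 ≤ u ^ ((1:ℝ)/4) :=
  le_of_pow_le_pow_left₀ (n := 4) (by norm_num) (rpow_nonneg (by linarith) _)
    (by rw [rpow_quarter_pow (by linarith)]; norm_num; linarith)

lemma Q_eq {u : ℝ} (hu : 0 ≤ u) :
    Q u = 1 / (u ^ ((1:ℝ)/4)) ^ 2 + sin (u ^ ((1:ℝ)/4)) / (u ^ ((1:ℝ)/4)) ^ 3 := by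
  rw [Q, sqrt_eq_rpow, rpow_quarter_pow hu, rpow_quarter_pow hu]
  norm_num

lemma hasDerivAt_rpow_quarter {u : ℝ} (hu : 0 < u) :
    HasDerivAt (fun u : ℝ => u ^ ((1:ℝ)/4)) (1 / (4 * (u ^ ((1:ℝ)/4)) ^ 3)) u := by
  convert hasDerivAt_rpow_const (p := (1:ℝ)/4) (Or.inl hu.ne') using 1
  rw [rpow_sub_one hu.ne']
  set x := u ^ ((1:ℝ)/4)
  have h4 : x ^ 4 = u := by rw [rpow_quarter_pow hu.le]; norm_num
  have hx : 0 < x := rpow_pos_of_pos hu _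
  rw [← h4]
  field_simp

lemma hasDerivAt_Q {u : ℝ} (hu : 0 < u) : HasDerivAt Q (dQ (u ^ ((1:ℝ)/4))) u := by
  have hx : u ^ ((1:ℝ)/4) ≠ 0 := (rpow_pos_of_pos hu _).ne'
  have hP : ∀ x : ℝ, x ≠ 0 → HasDerivAt (fun x : ℝ => 1 / x ^ 2 + sin x / x ^ 3)
      ((cos x - 2 - 3 * sin x / x) / x ^ 3) x := fun x hx =>
    (((hasDerivAt_const x (1:ℝ)).fun_div (hasDerivAt_pow 2 x) (pow_ne_zero 2 hx)).add
      ((hasDerivAt_sin x).fun_div (hasDerivAt_pow 3 x) (pow_ne_zero 3 hx))).congr_deriv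
      (by field_simp; ring)
  refine (((hP _ hx).comp u (hasDerivAt_rpow_quarter hu)).congr_of_eventuallyEq
    (eventually_of_mem (Ioi_mem_nhds hu) fun v hv => Q_eq (le_of_lt hv))).congr_deriv ?_
  simp only [dQ]
  field_simp

lemma hasDerivAt_dQ_rpow_quarter {u : ℝ} (hu : 0 < u) :
    HasDerivAt (fun u : ℝ => dQ (u ^ ((1:ℝ)/4))) (d2Q (u ^ ((1:ℝ)/4))) u := by
  have hx : u ^ ((1:ℝ)/4) ≠ 0 := (rpow_pos_of_pos hu _).ne'
  have hdQ : ∀ x : ℝ, x ≠ 0 → HasDerivAt dQ (4 * x ^ 3 * d2Q x) x := fun x hx =>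
    ((((hasDerivAt_cos x).sub_const 2).sub
      (((hasDerivAt_sin x).const_mul 3).fun_div (hasDerivAt_id x) hx)).fun_div
      ((hasDerivAt_pow 6 x).const_mul 4) (by positivity)).congr_deriv
      (by simp only [d2Q, id, Pi.sub_apply]; field_simp; ring)
  exact ((hdQ _ hx).comp u (hasDerivAt_rpow_quarter hu)).congr_deriv
    (by rw [mul_one_div, mul_div_cancel_left₀ _ (by positivity)])

lemma one_div_le_abs_dQ {x : ℝ} (hx : 3 ≤ x) : 1 / (8 * x ^ 6) ≤ |dQ x| := by
  have hx0 : 0 < x := by linarith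
  set k := 3 / x
  have hk : k ≤ 1 := (div_le_one hx0).2 hx
  have hk0 : 0 < k := by positivity
  have hinner : cos x - 2 - 3 * sin x / x ≤ -(1/2) := by
    have hsq : (cos x - k * sin x) ^ 2 ≤ 2 := calc
      _ ≤ (cos x - k * sin x) ^ 2 + (k * cos x + sin x) ^ 2 := by nlinarith
      _ = (1 + k ^ 2) * (sin x ^ 2 + cos x ^ 2) := by ring
      _ ≤ 2 := by rw [sin_sq_add_cos_sq]; nlinarith
    rw [show 3 * sin x / x = k * sin x by ring]
    nlinarith
  rw [dQ, abs_div, abs_of_pos (by positivity : (0:ℝ) < 4 * x ^ 6), abs_of_neg (by linarith)]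
  calc 1 / (8 * x ^ 6) = (1/2) / (4 * x ^ 6) := by field_simp; norm_num
    _ ≤ _ := div_le_div_of_nonneg_right (by linarith) (by positivity)

lemma dQ_ne_zero {x : ℝ} (hx : 3 ≤ x) : dQ x ≠ 0 := by
  have hx0 : 0 < x := by linarith
  exact abs_pos.1 ((by positivity : 0 < 1 / (8 * x ^ 6)).trans_le (one_div_le_abs_dQ hx))

lemma abs_dQ_le {x : ℝ} (hx : 3 ≤ x) : |dQ x| ≤ 1 / x ^ 6 := by
  have hx0 : 0 < x := by linarith
  have hsin : |3 * sin x / x| ≤ 1 := by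
    rw [abs_div, abs_mul, abs_of_pos hx0, abs_of_pos three_pos, div_le_one hx0]
    nlinarith [abs_sin_le_one x, abs_nonneg (sin x)]
  have hinner : |cos x - 2 - 3 * sin x / x| ≤ 4 := by
    have := abs_cos_le_one x
    rw [abs_le] at *; constructor <;> linarith
  rw [dQ, abs_div, abs_of_pos (by positivity : (0:ℝ) < 4 * x ^ 6), div_le_div_iff₀ (by positivity)
    (by positivity)]
  nlinarith [pow_pos hx0 6]

lemma abs_d2Q_le {x : ℝ} (hx : 3 ≤ x) : |d2Q x| ≤ 1 / x ^ 9 := by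
  have hx0 : 0 < x := by linarith
  have h1 : |(12 - 9 * cos x) / x| ≤ 7 := by
    rw [abs_div, abs_of_pos hx0, div_le_iff₀ hx0]
    have := abs_cos_le_one x
    rw [abs_le] at *; constructor <;> nlinarith
  have h2 : |21 * sin x / x ^ 2| ≤ 3 := by
    rw [abs_div, abs_mul, abs_of_pos (by positivity : (0:ℝ) < x ^ 2),
      abs_of_pos (by norm_num : (0:ℝ) < 21), div_le_iff₀ (by positivity)]
    nlinarith [abs_sin_le_one x, abs_nonneg (sin x)]
  have hinner : |-sin x + (12 - 9 * cos x) / x + 21 * sin x / x ^ 2| ≤ 16 := by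
    have := abs_sin_le_one x
    rw [abs_le] at *; constructor <;> linarith
  rw [d2Q, abs_div, abs_of_pos (by positivity : (0:ℝ) < 16 * x ^ 9), div_le_div_iff₀
    (by positivity) (by positivity)]
  nlinarith [pow_pos hx0 9]

lemma abs_d2Q_div_dQ_le {x : ℝ} (hx : 3 ≤ x) : |d2Q x / dQ x| ≤ 8 / x ^ 3 := by
  have hx0 : 0 < x := by linarith
  calc |d2Q x / dQ x| = |d2Q x| / |dQ x| := abs_div _ _
    _ ≤ (1 / x ^ 9) / (1 / (8 * x ^ 6)) :=
        div_le_div₀ (by positivity) (abs_d2Q_le hx) (by positivity) (one_div_le_abs_dQ hx)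
    _ = 8 / x ^ 3 := by field_simp

lemma tendsto_dQ_atTop : Tendsto dQ atTop (𝓝 0) := by
  refine squeeze_zero_norm' ?_
    ((tendsto_const_nhds (x := (1:ℝ))).div_atTop (tendsto_pow_atTop (n := 6) (by norm_num)))
  filter_upwards [eventually_ge_atTop 3] with x hx
  exact abs_dQ_le hx

lemma tendsto_d2Q_div_dQ_atTop : Tendsto (fun x => d2Q x / dQ x) atTop (𝓝 0) := by
  refine squeeze_zero_norm' ?_
    ((tendsto_const_nhds (x := (8:ℝ))).div_atTop (tendsto_pow_atTop (n := 3) (by norm_num)))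
  filter_upwards [eventually_ge_atTop 3] with x hx
  exact abs_d2Q_div_dQ_le hx

lemma continuousOn_d2Q_div_dQ : ContinuousOn (fun x => d2Q x / dQ x) (Ici 3) := by
  intro x hx
  have hx0 : x ≠ 0 := by simp only [mem_Ici] at hx; positivity
  have hdQ := dQ_ne_zero hx
  refine ContinuousAt.continuousWithinAt ?_
  unfold d2Q dQ at *
  fun_prop (disch := positivity)

lemma hasDerivAt_dQ_comp_of_local_left_inverse {ψ : ℝ → ℝ} {r : ℝ} (hψ : ContinuousAt ψ r)
    (hr : 81 ≤ ψ r) (hinv : ∀ᶠ y in 𝓝 r, Q (ψ y) = y) :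
    HasDerivAt (fun y => dQ (ψ y ^ ((1:ℝ)/4)))
      (d2Q (ψ r ^ ((1:ℝ)/4)) / dQ (ψ r ^ ((1:ℝ)/4))) r := by
  have hr0 : 0 < ψ r := by linarith
  exact HasDerivAt.comp_of_local_left_inverse (f' := fun u => dQ (u ^ ((1:ℝ)/4)))
    (f'' := fun u => d2Q (u ^ ((1:ℝ)/4))) (hasDerivAt_Q hr0) (hasDerivAt_dQ_rpow_quarter hr0)
    (dQ_ne_zero (three_le_rpow_quarter hr)) hψ hinv

/-- With q, φ, g as before, g is C¹ on [0, q(-1)); in particular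
    g'(r) → 0 = g'(0) as r → 0⁺. -/
theorem stmt_16 (c₀ : ℝ) (hc₀ : 82 ≤ c₀) (q φ g : ℝ → ℝ)
    (hq : ∀ t : ℝ, q t = 1 / Real.sqrt (t + c₀) +
      Real.sin ((t + c₀) ^ ((1:ℝ)/4)) / (t + c₀) ^ ((3:ℝ)/4))
    (hanti : StrictAntiOn q (Set.Ici (-1)))
    (hlim : Filter.Tendsto q Filter.atTop (nhds 0))
    (hφ : ∀ t : ℝ, -1 ≤ t → φ (q t) = t)
    (hφ' : ∀ r : ℝ, r ∈ Set.Ioo 0 (q (-1)) → -1 < φ r ∧ q (φ r) = r)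
    (hg : ∀ r : ℝ, r ∈ Set.Ioo 0 (q (-1)) → g r = deriv q (φ r))
    (hg0 : g 0 = 0) :
    ContDiffOn ℝ 1 g (Set.Ico 0 (q (-1))) ∧
    Filter.Tendsto (fun r => deriv g r) (nhdsWithin 0 (Set.Ioi 0)) (nhds 0) := by
  have hqQ : q = fun t => Q (t + c₀) := funext hq
  have hpos : ∀ t, -1 ≤ t → 0 < q t := fun t ht => hanti.lt_of_tendsto_atTop hlim ht
  have hb := hpos (-1) le_rfl
  have hmaps : MapsTo φ (Ioo 0 (q (-1))) (Ioi (-1)) := fun r hr => (hφ' r hr).1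
  have hinv : RightInvOn φ q (Ioo 0 (q (-1))) := fun r hr => (hφ' r hr).2
  have hφc := hanti.continuousOn_of_rightInvOn hpos hmaps hinv hφ
  have hu : ∀ r ∈ Ioo 0 (q (-1)), 81 ≤ φ r + c₀ := fun r hr => by linarith [(hmaps hr).out]
  set X : ℝ → ℝ := fun r => (φ r + c₀) ^ ((1:ℝ)/4)
  have hXtop : Tendsto X (𝓝[>] 0) atTop := (tendsto_rpow_atTop (by norm_num)).comp
    (tendsto_atTop_add_const_right _ c₀ (hanti.tendsto_atTop_of_rightInvOn hpos hb hmaps hinv))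
  have hgX : EqOn g (dQ ∘ X) (Ioo 0 (q (-1))) := fun r hr => by
    rw [hg r hr, hqQ, deriv_comp_add_const, (hasDerivAt_Q (by linarith [hu r hr])).deriv]
    rfl
  have hderiv : ∀ r ∈ Ioo 0 (q (-1)), HasDerivAt g (d2Q (X r) / dQ (X r)) r := fun r hr =>
    have hr' := isOpen_Ioo.mem_nhds hr
    (hasDerivAt_dQ_comp_of_local_left_inverse ((hφc.continuousAt hr').add_const c₀) (hu r hr)
      (eventually_of_mem hr' fun y hy => by simpa only [hqQ] using hinv hy)).congr_of_eventuallyEq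
      (eventually_of_mem hr' hgX)
  have hlim' : Tendsto (fun r => d2Q (X r) / dQ (X r)) (𝓝[>] 0) (𝓝 0) :=
    tendsto_d2Q_div_dQ_atTop.comp hXtop
  have hXc : ContinuousOn X (Ioo 0 (q (-1))) :=
    (hφc.add_const c₀).rpow_const fun r hr => Or.inl (by linarith [hu r hr])
  refine ⟨contDiffOn_one_Ico_of_tendsto hb hderiv (continuousOn_d2Q_div_dQ.comp hXc
    fun r hr => three_le_rpow_quarter (hu r hr)) ?_ hlim', hlim'.congr' ?_⟩
  · rw [ContinuousWithinAt, hg0]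
    exact (tendsto_dQ_atTop.comp hXtop).congr' (eventually_of_mem (Ioo_mem_nhdsGT hb) hgX.symm)
  · filter_upwards [Ioo_mem_nhdsGT hb] with r hr
    exact (hderiv r hr).deriv.symm
end
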